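/- (Theorem 4: non-trivial consensus under switching topologies.) Fix N, d ≥ 1 and θ ∈ ℝ^d, θ ≠ 0. Let A^{(1)},…,A^{(M)} be finitely many signed matrix-weight assignments on N vertices, each satisfying Assumption 1 with its own partition V1^{(m)} ∪ V2^{(m)}, and such that for each m, Σ_{j∈Ω_i^{(m)}}|A^{(m)}_{ij}| is positive definite for every i ∈ V1^{(m)}, where Ω_i^{(m)} = {j : A^{(m)}_{ij} is negative semidefinite and nonzero}. For each m choose δ^{(m)} > max( 0, max_{i∈V1^{(m)}} (1/2) λ_max[ (Σ_{j∈Ω_i^{(m)}}|A^{(m)}_{ij}|)⁻¹ ( Σ_{j∈N'^{(m)}_i}|A^{(m)}_{ji}| − Σ_{j∈N^{(m)}_i}|A^{(m)}_{ij}| ) ] ) and apply the design: δ_i^{(m)} = δ^{(m)} for i with Ω_i^{(m)} ≠ ∅ and 0 otherwise; B_i^{(m)} = Σ_{j∈Ω_i^{(m)}}|A^{(m)}_{ij}| for such i and 0 otherwise; x_0^{(m)} = (1 + 2/δ^{(m)})θ; let L_B^{(m)} be the corresponding grounded Laplacian and b^{(m)} ∈ ℝ^{Nd} the vector with i-th block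 δ_i^{(m)} B_i^{(m)} x_0^{(m)}. Let α > 0, let (t_k)_{k≥0} be strictly increasing with t_0 = 0, t_{k+1} − t_k ≥ α, t_k → ∞, and σ : ℕ → {1,…,M}. Then every continuous x : [0,∞) → ℝ^{Nd} that on each interval (t_k, t_{k+1}) is differentiable with x'(t) = −L_B^{(σ(k))} x(t) + b^{(σ(k))} satisfies x(t) → 1_N ⊗ θ as t → ∞. -/

import Mathlib

open Matrix Filter
open scoped Classical

/-- `|Q|` for a real symmetric matrix that is positive semidefinite or negative
semidefinite: it equals `Q` in the first case and `-Q` in the second. -/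
noncomputable def absM {d : ℕ} (Q : Matrix (Fin d) (Fin d) ℝ) : Matrix (Fin d) (Fin d) ℝ :=
  if Q.PosSemidef then Q else -Q

/-- A signed matrix-weight assignment: for `i ≠ j`, each weight `A i j` is symmetric
and either positive semidefinite or negative semidefinite. -/
def SignedWeights {N d : ℕ} (A : Fin N → Fin N → Matrix (Fin d) (Fin d) ℝ) : Prop :=
  ∀ i j : Fin N, i ≠ j → (A i j).IsSymm ∧ ((A i j).PosSemidef ∨ (-(A i j)).PosSemidef)

/-- The signed matrix-weighted Laplacian: `(i,j)` block `−A_{ij}` for `j ≠ i`, and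
`(i,i)` block `Σ_{k≠i}|A_{ik}|`. -/
noncomputable def Lap {N d : ℕ} (A : Fin N → Fin N → Matrix (Fin d) (Fin d) ℝ) :
    Matrix (Fin N × Fin d) (Fin N × Fin d) ℝ :=
  fun p q =>
    if p.1 = q.1 then (∑ k ∈ Finset.univ.erase p.1, absM (A p.1 k)) p.2 q.2
    else (-(A p.1 q.1)) p.2 q.2

/-- The block-diagonal `Nd × Nd` matrix with `d × d` diagonal blocks `D 1, …, D N`. -/
def blockDiag' {N d : ℕ} (D : Fin N → Matrix (Fin d) (Fin d) ℝ) :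
    Matrix (Fin N × Fin d) (Fin N × Fin d) ℝ :=
  fun p q => if p.1 = q.1 then D p.1 p.2 q.2 else 0

/-- Matrix-weighted in-degree `Σ_{k∈N_i}|A_{ik}|` of vertex `i`
(weights `A i k = 0` contribute nothing). -/
noncomputable def inDeg {N d : ℕ} (A : Fin N → Fin N → Matrix (Fin d) (Fin d) ℝ)
    (i : Fin N) : Matrix (Fin d) (Fin d) ℝ :=
  ∑ k ∈ Finset.univ.erase i, absM (A i k)

/-- Matrix-weighted out-degree `Σ_{k∈N'_i}|A_{ki}|` of vertex `i`. -/
noncomputable def outDeg {N d : ℕ} (A : Fin N → Fin N → Matrix (Fin d) (Fin d) ℝ)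
    (i : Fin N) : Matrix (Fin d) (Fin d) ℝ :=
  ∑ k ∈ Finset.univ.erase i, absM (A k i)

/-- A positive–negative path from `i` to `j`: a sequence `i = p 0, …, p m = j` with
`m ≥ 1` in which every traversed weight `A_{p(s+1), p(s)}` is positive or negative
definite. -/
def PNPath {N d : ℕ} (A : Fin N → Fin N → Matrix (Fin d) (Fin d) ℝ) (i j : Fin N) : Prop :=
  ∃ m : ℕ, 0 < m ∧ ∃ p : Fin (m + 1) → Fin N, p 0 = i ∧ p (Fin.last m) = j ∧
    ∀ s : Fin m, (A (p s.succ) (p s.castSucc)).PosDef ∨ (-(A (p s.succ) (p s.castSucc))).PosDef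

/-- Vertex `j` is in-degree-dominated. -/
def InDegDom {N d : ℕ} (A : Fin N → Fin N → Matrix (Fin d) (Fin d) ℝ) (j : Fin N) : Prop :=
  (inDeg A j - outDeg A j).PosSemidef

/-- Assumption 1: `{1,…,N} = V1 ∪ V2` disjointly, every `j ∈ V2` is reached from some
`i ∈ V1` by a positive–negative path, and every `j ∈ V2` is in-degree-dominated. -/
def Assumption1 {N d : ℕ} (A : Fin N → Fin N → Matrix (Fin d) (Fin d) ℝ)
    (V1 V2 : Finset (Fin N)) : Prop :=
  V1 ∪ V2 = Finset.univ ∧ V1 ∩ V2 = ∅ ∧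
    (∀ j ∈ V2, ∃ i ∈ V1, PNPath A i j) ∧ (∀ j ∈ V2, InDegDom A j)

/-- `Ω_i`: the set of (other) vertices `j` with `A_{ij}` negative semidefinite and nonzero. -/
noncomputable def OmegaSet {N d : ℕ} (A : Fin N → Fin N → Matrix (Fin d) (Fin d) ℝ)
    (i : Fin N) : Finset (Fin N) :=
  (Finset.univ.erase i).filter fun j => (-(A i j)).PosSemidef ∧ A i j ≠ 0

/-! The design makes `1_N ⊗ θ` an equilibrium of every mode, `L_B (1_N ⊗ θ) = b`, because
`Σ_{k≠i} (|A_ik| − A_ik) = 2 Σ_{j∈Ω_i} |A_ij|`. Each grounded Laplacian is positive definite as a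
(non-symmetric) quadratic form: `2 v·L_B v` splits into nonnegative edge energies and vertex terms
`v_i·(2δ B_i − (out_i − in_i)) v_i`, positive definite on `V1` by the choice of `δ` and positive
semidefinite on `V2` by in-degree domination. If all of them vanish, `v` vanishes on `V1` and then,
along positive–negative paths, everywhere. The finitely many modes therefore share a `c > 0` with
`c |v|² ≤ v·L_B v`, and `|x(t) − 1_N ⊗ θ|²` decays like `exp(−2ct)` across all switching times. -/

open scoped MatrixOrder

theorem Matrix.PosSemidef.eq_zero_of_neg {n : Type*} {Q : Matrix n n ℝ} (hQ : Q.PosSemidef)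
    (hQ' : (-Q).PosSemidef) : Q = 0 :=
  le_antisymm (by rwa [le_iff, zero_sub]) (nonneg_iff_posSemidef.mpr hQ)

section QuadraticForms
variable {n : Type*} [Fintype n]

theorem Matrix.IsHermitian.dotProduct_mulVec_comm {Q : Matrix n n ℝ} (hQ : Q.IsHermitian)
    (x y : n → ℝ) : x ⬝ᵥ Q *ᵥ y = y ⬝ᵥ Q *ᵥ x := by
  rw [dotProduct_mulVec, ← mulVec_transpose, ← conjTranspose_eq_transpose_of_trivial, hQ.eq,
    dotProduct_comm]

theorem Matrix.PosDef.exists_pos_mul_dotProduct_self_le {P : Matrix n n ℝ} (hP : P.PosDef) :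
    ∃ c > 0, ∀ v : n → ℝ, c * (v ⬝ᵥ v) ≤ v ⬝ᵥ P *ᵥ v := by
  cases isEmpty_or_nonempty n
  · exact ⟨1, one_pos, fun v => by simp [dotProduct]⟩
  obtain ⟨c, hc, hcP⟩ := (CFC.exists_pos_algebraMap_le_iff hP.isHermitian).2
    fun x hx => hP.isStrictlyPositive.spectrum_pos hx
  refine ⟨c, hc, fun v => ?_⟩
  have := (le_iff.mp hcP).dotProduct_mulVec_nonneg v
  simp only [star_trivial, sub_mulVec, dotProduct_sub, Algebra.algebraMap_eq_smul_one,
    smul_mulVec, one_mulVec, dotProduct_smul, smul_eq_mul] at this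
  linarith

theorem exists_pos_mul_dotProduct_self_le_of_pos {M : Matrix n n ℝ}
    (hM : ∀ v : n → ℝ, v ≠ 0 → 0 < v ⬝ᵥ M *ᵥ v) :
    ∃ c > 0, ∀ v : n → ℝ, c * (v ⬝ᵥ v) ≤ v ⬝ᵥ M *ᵥ v := by
  have hsym : ∀ v : n → ℝ, v ⬝ᵥ (M + Mᵀ) *ᵥ v = 2 * (v ⬝ᵥ M *ᵥ v) := fun v => by
    rw [add_mulVec, dotProduct_add, mulVec_transpose, dotProduct_comm v (v ᵥ* M),
      ← dotProduct_mulVec]; ring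
  have hP : (M + Mᵀ).PosDef := .of_dotProduct_mulVec_pos
    (by simp [IsHermitian, add_comm]) fun v hv => by simpa [hsym] using hM v hv
  obtain ⟨c, hc, hcP⟩ := hP.exists_pos_mul_dotProduct_self_le
  exact ⟨c / 2, by positivity, fun v => by linarith [hcP v, hsym v]⟩

/-- With `R = S^{1/2}`, `S⁻¹ D` is similar to `R⁻¹ D R⁻¹`, whose spectrum thus lies below `c`,
and `c • S - D = R (c - R⁻¹ D R⁻¹) R`. -/
theorem Matrix.PosDef.smul_sub_of_isRoot_charpoly_lt [DecidableEq n] {S D : Matrix n n ℝ}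
    (hS : S.PosDef) (hD : D.IsHermitian) {c : ℝ} (hc : ∀ μ, (S⁻¹ * D).charpoly.IsRoot μ → μ < c) :
    (c • S - D).PosDef := by
  have hR : IsStrictlyPositive (CFC.sqrt S) := hS.isStrictlyPositive.sqrt
  set R := CFC.sqrt S
  have hRu : IsUnit R := hR.isUnit
  have hRR : R * R = S := CFC.sqrt_mul_sqrt_self S
  have hRh : R.IsHermitian := hR.isSelfAdjoint
  have hRi : R * R⁻¹ = 1 := mul_nonsing_inv R ((isUnit_iff_isUnit_det R).mp hRu)
  have hRi' : R⁻¹ * R = 1 := nonsing_inv_mul R ((isUnit_iff_isUnit_det R).mp hRu)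
  set E := R⁻¹ * D * R⁻¹
  have hEh : E.IsHermitian := by
    have := isHermitian_conjTranspose_mul_mul R⁻¹ hD
    rwa [hRh.inv.eq] at this
  have hspec : ∀ μ ∈ spectrum ℝ E, μ < c := by
    intro μ hμ
    refine hc μ (mem_spectrum_iff_isRoot_charpoly.mp ?_)
    have : S⁻¹ * D = ((hRu.unit⁻¹ : (Matrix n n ℝ)ˣ) : Matrix n n ℝ) * E * hRu.unit := by
      rw [coe_units_inv, hRu.unit_spec, ← hRR, mul_inv_rev]
      simp only [E, mul_assoc, hRi', mul_one]
    rwa [this, spectrum.units_conjugate']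
  have hpos : (c • 1 - E).PosDef := by
    rw [← isStrictlyPositive_iff_posDef,
      StarOrderedRing.isStrictlyPositive_iff_spectrum_pos (R := ℝ) _ ?_]
    · intro x hx
      rw [← Algebra.algebraMap_eq_smul_one, ← spectrum.singleton_sub_eq] at hx
      obtain ⟨_, rfl, μ, hμ, rfl⟩ := hx
      linarith [hspec μ hμ]
    · rw [← Algebra.algebraMap_eq_smul_one]
      exact (IsSelfAdjoint.algebraMap _ (.all c)).sub hEh
  have hSD : c • S - D = Rᴴ * (c • 1 - E) * R := by
    rw [hRh.eq, mul_sub, sub_mul, ← hRR]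
    simp only [E, mul_smul_comm, smul_mul_assoc, mul_one]
    congr 1
    rw [← mul_assoc, ← mul_assoc, hRi, one_mul, mul_assoc, hRi', mul_one]
  rw [hSD]
  exact hpos.conjTranspose_mul_mul_same (mulVec_injective_iff_isUnit.mpr hRu)

theorem norm_le_sqrt_dotProduct_self (v : n → ℝ) :
    ‖v‖ ≤ √(v ⬝ᵥ v) :=
  (pi_norm_le_iff_of_nonneg (Real.sqrt_nonneg _)).mpr fun i => by
    rw [Real.norm_eq_abs]
    refine Real.abs_le_sqrt ?_
    simpa [dotProduct, sq] using
      Finset.single_le_sum (fun j _ => mul_self_nonneg (v j)) (Finset.mem_univ i)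

end QuadraticForms

section AbsM
variable {d : ℕ} {Q : Matrix (Fin d) (Fin d) ℝ}

theorem absM_of_posSemidef (h : Q.PosSemidef) : absM Q = Q := if_pos h

theorem absM_of_neg_posSemidef (h : (-Q).PosSemidef) : absM Q = -Q := by
  by_cases hQ : Q.PosSemidef
  · rw [absM_of_posSemidef hQ, hQ.eq_zero_of_neg h, neg_zero]
  · exact if_neg hQ

theorem posSemidef_absM (h : Q.PosSemidef ∨ (-Q).PosSemidef) : (absM Q).PosSemidef := by
  rcases h with h | h
  · rwa [absM_of_posSemidef h]
  · rwa [absM_of_neg_posSemidef h]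

theorem posDef_absM (h : Q.PosDef ∨ (-Q).PosDef) : (absM Q).PosDef := by
  rcases h with h | h
  · rwa [absM_of_posSemidef h.posSemidef]
  · rwa [absM_of_neg_posSemidef h.posSemidef]

theorem absM_sub_self (h : Q.PosSemidef ∨ (-Q).PosSemidef) :
    absM Q - Q = if (-Q).PosSemidef ∧ Q ≠ 0 then (2 : ℝ) • absM Q else 0 := by
  by_cases hQ : Q.PosSemidef
  · rw [absM_of_posSemidef hQ, sub_self, if_neg fun h' => h'.2 (hQ.eq_zero_of_neg h'.1)]
  · have hQ' := h.resolve_left hQ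
    rw [if_pos ⟨hQ', fun h0 => hQ (h0 ▸ .zero)⟩, absM_of_neg_posSemidef hQ', two_smul]
    abel

/-- Equal to `(x ∓ y)·|Q|(x ∓ y)` according to the sign of `Q`. -/
noncomputable def edgeEnergy (Q : Matrix (Fin d) (Fin d) ℝ) (x y : Fin d → ℝ) : ℝ :=
  x ⬝ᵥ absM Q *ᵥ x + y ⬝ᵥ absM Q *ᵥ y - 2 * (x ⬝ᵥ Q *ᵥ y)

theorem edgeEnergy_nonneg (h : Q.PosSemidef ∨ (-Q).PosSemidef) (x y : Fin d → ℝ) :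
    0 ≤ edgeEnergy Q x y := by
  rcases h with h | h
  · have := h.dotProduct_mulVec_nonneg (x - y)
    have hc := h.isHermitian.dotProduct_mulVec_comm x y
    simp only [star_trivial, mulVec_sub, dotProduct_sub, sub_dotProduct] at this
    rw [edgeEnergy, absM_of_posSemidef h]
    linarith
  · have := h.dotProduct_mulVec_nonneg (x + y)
    have hc := h.isHermitian.dotProduct_mulVec_comm x y
    simp only [star_trivial, mulVec_add, dotProduct_add, add_dotProduct, neg_mulVec,
      dotProduct_neg] at this hc
    rw [edgeEnergy, absM_of_neg_posSemidef h]
    simp only [neg_mulVec, dotProduct_neg]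
    linarith

theorem edgeEnergy_zero_right (x : Fin d → ℝ) : edgeEnergy Q x 0 = x ⬝ᵥ absM Q *ᵥ x := by
  simp [edgeEnergy]

end AbsM

section Blocks
variable {N d : ℕ}

theorem dotProduct_eq_sum_curry {ι κ : Type*} [Fintype ι] [Fintype κ] (v w : ι × κ → ℝ) :
    v ⬝ᵥ w = ∑ i, v.curry i ⬝ᵥ w.curry i :=
  Fintype.sum_prod_type _

theorem curry_blockDiag'_mulVec (D : Fin N → Matrix (Fin d) (Fin d) ℝ)
    (w : Fin N × Fin d → ℝ) (i : Fin N) :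
    (blockDiag' D *ᵥ w).curry i = D i *ᵥ w.curry i := by
  ext a
  simp only [Function.curry_apply, mulVec, dotProduct_eq_sum_curry, _root_.blockDiag']
  rw [Finset.sum_eq_single i (fun j _ hj => by simp [dotProduct, Ne.symm hj]) (by simp)]
  simp [dotProduct]

theorem curry_lap_mulVec (A : Fin N → Fin N → Matrix (Fin d) (Fin d) ℝ)
    (w : Fin N × Fin d → ℝ) (i : Fin N) :
    (Lap A *ᵥ w).curry i =
      inDeg A i *ᵥ w.curry i - ∑ k ∈ Finset.univ.erase i, A i k *ᵥ w.curry k := by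
  ext a
  simp only [Function.curry_apply, mulVec, dotProduct_eq_sum_curry, Lap]
  rw [← Finset.add_sum_erase _ _ (Finset.mem_univ i), Pi.sub_apply, Finset.sum_apply,
    sub_eq_add_neg, ← Finset.sum_neg_distrib]
  refine congrArg₂ (· + ·) (by simp [inDeg, mulVec, dotProduct])
    (Finset.sum_congr rfl fun k hk => ?_)
  simp [mulVec, dotProduct, Ne.symm (Finset.ne_of_mem_erase hk)]

theorem dotProduct_blockDiag'_mulVec (D : Fin N → Matrix (Fin d) (Fin d) ℝ)
    (v : Fin N × Fin d → ℝ) :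
    v ⬝ᵥ blockDiag' D *ᵥ v = ∑ i, v.curry i ⬝ᵥ D i *ᵥ v.curry i := by
  simp only [dotProduct_eq_sum_curry v, curry_blockDiag'_mulVec]

theorem dotProduct_lap_mulVec (A : Fin N → Fin N → Matrix (Fin d) (Fin d) ℝ)
    (v : Fin N × Fin d → ℝ) :
    v ⬝ᵥ Lap A *ᵥ v = ∑ i, v.curry i ⬝ᵥ inDeg A i *ᵥ v.curry i
      - ∑ i, ∑ k ∈ Finset.univ.erase i, v.curry i ⬝ᵥ A i k *ᵥ v.curry k := by
  simp only [dotProduct_eq_sum_curry v, curry_lap_mulVec, dotProduct_sub, dotProduct_sum,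
    Finset.sum_sub_distrib]

end Blocks

section Energy
variable {N d : ℕ}

theorem two_mul_dotProduct_lap_mulVec (A : Fin N → Fin N → Matrix (Fin d) (Fin d) ℝ)
    (v : Fin N × Fin d → ℝ) :
    2 * (v ⬝ᵥ Lap A *ᵥ v) =
      ∑ i, ∑ k ∈ Finset.univ.erase i, edgeEnergy (A i k) (v.curry i) (v.curry k)
        + ∑ i, v.curry i ⬝ᵥ (inDeg A i - outDeg A i) *ᵥ v.curry i := by
  have hin : ∀ i, ∑ k ∈ Finset.univ.erase i, v.curry i ⬝ᵥ absM (A i k) *ᵥ v.curry i =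
      v.curry i ⬝ᵥ inDeg A i *ᵥ v.curry i := fun i => by
    simp only [inDeg, sum_mulVec, dotProduct_sum]
  have hout : ∑ i, ∑ k ∈ Finset.univ.erase i, v.curry k ⬝ᵥ absM (A i k) *ᵥ v.curry k =
      ∑ k, v.curry k ⬝ᵥ outDeg A k *ᵥ v.curry k := by
    rw [Finset.sum_comm' (t' := Finset.univ) (s' := fun k => Finset.univ.erase k)
      (fun i k => by simp [ne_comm])]
    simp only [outDeg, sum_mulVec, dotProduct_sum]
  simp only [edgeEnergy, Finset.sum_sub_distrib, Finset.sum_add_distrib, ← Finset.mul_sum, hin,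
    hout, dotProduct_lap_mulVec, sub_mulVec, dotProduct_sub]
  ring

theorem eq_zero_of_pnPath {A : Fin N → Fin N → Matrix (Fin d) (Fin d) ℝ} {u : Fin N → Fin d → ℝ}
    (hE : ∀ i k, k ≠ i → edgeEnergy (A i k) (u i) (u k) = 0) {i j : Fin N}
    (hp : PNPath A i j) (hi : u i = 0) : u j = 0 := by
  obtain ⟨m, -, p, rfl, rfl, hdef⟩ := hp
  suffices ∀ s, u (p s) = 0 from this _
  intro s
  induction s using Fin.induction with
  | zero => exact hi
  | succ s ih =>
    by_cases hs : p s.castSucc = p s.succ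
    · rwa [← hs]
    have h0 := hE _ _ hs
    rw [ih, edgeEnergy_zero_right] at h0
    by_contra hne
    exact ((posDef_absM (hdef s)).dotProduct_mulVec_pos hne).ne' (by simpa using h0)

end Energy

section GroundedLaplacian
variable {N d : ℕ}

noncomputable def negInDeg (A : Fin N → Fin N → Matrix (Fin d) (Fin d) ℝ) (i : Fin N) :
    Matrix (Fin d) (Fin d) ℝ :=
  ∑ j ∈ OmegaSet A i, absM (A i j)

/-- The grounded Laplacian `L_B` of the design: `δ_i B_i = δ Σ_{j∈Ω_i} |A_ij|` whether or not
`Ω_i` is empty. -/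
noncomputable def groundedLap (A : Fin N → Fin N → Matrix (Fin d) (Fin d) ℝ) (δ : ℝ) :
    Matrix (Fin N × Fin d) (Fin N × Fin d) ℝ :=
  Lap A + blockDiag' fun i => δ • negInDeg A i

variable {A : Fin N → Fin N → Matrix (Fin d) (Fin d) ℝ}

theorem posSemidef_negInDeg (i : Fin N) : (negInDeg A i).PosSemidef :=
  posSemidef_sum _ fun _ hj => posSemidef_absM (.inr (Finset.mem_filter.mp hj).2.1)

theorem SignedWeights.posSemidef_inDeg (hA : SignedWeights A) (i : Fin N) :
    (inDeg A i).PosSemidef :=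
  posSemidef_sum _ fun _ hk => posSemidef_absM (hA i _ (Finset.ne_of_mem_erase hk).symm).2

theorem SignedWeights.posSemidef_outDeg (hA : SignedWeights A) (i : Fin N) :
    (outDeg A i).PosSemidef :=
  posSemidef_sum _ fun _ hk => posSemidef_absM (hA _ i (Finset.ne_of_mem_erase hk)).2

theorem SignedWeights.posDef_two_mul_smul_negInDeg_sub (hA : SignedWeights A) {i : Fin N}
    (hi : (negInDeg A i).PosDef) {δ : ℝ}
    (hδ : ∀ μ, ((negInDeg A i)⁻¹ * (outDeg A i - inDeg A i)).charpoly.IsRoot μ → μ / 2 < δ) :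
    ((2 * δ) • negInDeg A i - (outDeg A i - inDeg A i)).PosDef :=
  hi.smul_sub_of_isRoot_charpoly_lt
    ((hA.posSemidef_outDeg i).isHermitian.sub (hA.posSemidef_inDeg i).isHermitian)
    fun μ hμ => by linarith [hδ μ hμ]

theorem two_mul_dotProduct_groundedLap_mulVec (δ : ℝ) (v : Fin N × Fin d → ℝ) :
    2 * (v ⬝ᵥ groundedLap A δ *ᵥ v) =
      ∑ i, ∑ k ∈ Finset.univ.erase i, edgeEnergy (A i k) (v.curry i) (v.curry k)
        + ∑ i, v.curry i ⬝ᵥ ((2 * δ) • negInDeg A i - (outDeg A i - inDeg A i)) *ᵥ v.curry i := by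
  rw [groundedLap, add_mulVec, dotProduct_add, mul_add, two_mul_dotProduct_lap_mulVec,
    dotProduct_blockDiag'_mulVec, add_assoc, Finset.mul_sum, ← Finset.sum_add_distrib]
  congr 2
  ext i
  simp only [sub_mulVec, smul_mulVec, dotProduct_sub, dotProduct_smul, smul_eq_mul]
  ring

theorem dotProduct_groundedLap_mulVec_pos (hA : SignedWeights A) {V1 V2 : Finset (Fin N)}
    (hAss : Assumption1 A V1 V2) {δ : ℝ} (hδ : 0 ≤ δ)
    (hV1 : ∀ i ∈ V1, ((2 * δ) • negInDeg A i - (outDeg A i - inDeg A i)).PosDef)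
    {v : Fin N × Fin d → ℝ} (hv : v ≠ 0) : 0 < v ⬝ᵥ groundedLap A δ *ᵥ v := by
  obtain ⟨hcover, -, hpath, hdom⟩ := hAss
  have hmem : ∀ i, i ∈ V1 ∨ i ∈ V2 := fun i => Finset.mem_union.mp (hcover ▸ Finset.mem_univ i)
  set u := v.curry
  set T : Fin N → ℝ := fun i => u i ⬝ᵥ ((2 * δ) • negInDeg A i - (outDeg A i - inDeg A i)) *ᵥ u i
  have hE : ∀ i, ∀ k ∈ Finset.univ.erase i, 0 ≤ edgeEnergy (A i k) (u i) (u k) := fun i k hk =>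
    edgeEnergy_nonneg (hA i k (Finset.ne_of_mem_erase hk).symm).2 _ _
  have hT : ∀ i, 0 ≤ T i := by
    intro i
    rcases hmem i with hi | hi
    · simpa using (hV1 i hi).posSemidef.dotProduct_mulVec_nonneg (u i)
    · have h1 := (hdom i hi).dotProduct_mulVec_nonneg (u i)
      have h2 := (posSemidef_negInDeg (A := A) i).dotProduct_mulVec_nonneg (u i)
      simp only [star_trivial] at h1 h2
      simp only [T, sub_mulVec, smul_mulVec, dotProduct_sub, dotProduct_smul, smul_eq_mul] at h1 ⊢
      linarith [mul_nonneg hδ h2]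
  by_contra hle
  have hsum := two_mul_dotProduct_groundedLap_mulVec (A := A) δ v
  have hS1 := Finset.sum_nonneg fun i (_ : i ∈ Finset.univ) => Finset.sum_nonneg (hE i)
  have hS2 := Finset.sum_nonneg fun i (_ : i ∈ Finset.univ) => hT i
  have hE0 : ∀ i k, k ≠ i → edgeEnergy (A i k) (u i) (u k) = 0 := fun i k hki => by
    have := (Finset.sum_eq_zero_iff_of_nonneg fun i _ => Finset.sum_nonneg (hE i)).mp
      (by linarith [not_lt.mp hle]) i (Finset.mem_univ i)
    exact (Finset.sum_eq_zero_iff_of_nonneg (hE i)).mp this k (by simp [hki])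
  have hT0 : ∀ i, T i = 0 := fun i =>
    (Finset.sum_eq_zero_iff_of_nonneg fun i _ => hT i).mp (by linarith [not_lt.mp hle]) i
      (Finset.mem_univ i)
  have hV1zero : ∀ i ∈ V1, u i = 0 := fun i hi => by
    by_contra h
    exact ((hV1 i hi).dotProduct_mulVec_pos h).ne' (by simpa using hT0 i)
  have hzero : ∀ j, u j = 0 := fun j => (hmem j).elim (hV1zero j) fun hj => by
    obtain ⟨i, hi, hp⟩ := hpath j hj
    exact eq_zero_of_pnPath hE0 hp (hV1zero i hi)
  exact hv (funext fun p => congrFun (hzero p.1) p.2)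

end GroundedLaplacian

section Equilibrium
variable {N d : ℕ} {A : Fin N → Fin N → Matrix (Fin d) (Fin d) ℝ}

theorem SignedWeights.inDeg_sub_sum (hA : SignedWeights A) (i : Fin N) :
    inDeg A i - ∑ k ∈ Finset.univ.erase i, A i k = (2 : ℝ) • negInDeg A i := by
  rw [inDeg, ← Finset.sum_sub_distrib, negInDeg, OmegaSet, Finset.smul_sum, Finset.sum_filter]
  exact Finset.sum_congr rfl fun k hk =>
    absM_sub_self (hA i k (Finset.ne_of_mem_erase hk).symm).2

theorem SignedWeights.groundedLap_mulVec_const (hA : SignedWeights A) {δ : ℝ} (hδ : δ ≠ 0)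
    (θ : Fin d → ℝ) :
    groundedLap A δ *ᵥ (fun p => θ p.2) =
      fun p => ((δ • negInDeg A p.1) *ᵥ ((1 + 2 / δ) • θ)) p.2 := by
  ext ⟨i, a⟩
  have hL := congrFun (curry_lap_mulVec A (fun p => θ p.2) i) a
  have hD := congrFun (curry_blockDiag'_mulVec (fun i => δ • negInDeg A i) (fun p => θ p.2) i) a
  simp only [Function.curry_apply] at hL hD
  rw [groundedLap, add_mulVec, Pi.add_apply, hL, hD]
  change ((inDeg A i *ᵥ θ) - ∑ k ∈ Finset.univ.erase i, A i k *ᵥ θ) a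
    + ((δ • negInDeg A i) *ᵥ θ) a = _
  rw [← sum_mulVec, ← sub_mulVec, hA.inDeg_sub_sum]
  simp only [smul_mulVec, mulVec_smul, Pi.smul_apply, smul_eq_mul]
  field_simp
  ring

end Equilibrium

section Decay

theorem HasDerivAt.dotProduct_self {n : Type*} [Fintype n] {e : ℝ → n → ℝ} {e' : n → ℝ}
    {t : ℝ} (h : HasDerivAt e e' t) :
    HasDerivAt (fun s => e s ⬝ᵥ e s) (2 * (e t ⬝ᵥ e')) t := by
  have hsum := HasDerivAt.fun_sum (u := Finset.univ) fun p _ =>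
    (hasDerivAt_pi.mp h p).mul (hasDerivAt_pi.mp h p)
  refine hsum.congr_deriv ?_
  simp only [dotProduct, Finset.mul_sum]
  exact Finset.sum_congr rfl fun p _ => by ring

theorem antitoneOn_mul_exp_of_hasDerivAt {g g' : ℝ → ℝ} {κ a b : ℝ}
    (hg : ContinuousOn g (Set.Icc a b)) (hd : ∀ t ∈ Set.Ioo a b, HasDerivAt g (g' t) t)
    (hle : ∀ t ∈ Set.Ioo a b, g' t ≤ -κ * g t) :
    AntitoneOn (fun t => g t * Real.exp (κ * t)) (Set.Icc a b) := by
  refine antitoneOn_of_hasDerivWithinAt_nonpos (convex_Icc a b) (hg.mul (by fun_prop))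
    (f' := fun t => (g' t + κ * g t) * Real.exp (κ * t)) (fun t ht => ?_) (fun t ht => ?_)
  · rw [interior_Icc] at ht ⊢
    have he : HasDerivAt (fun s => Real.exp (κ * s)) (Real.exp (κ * t) * κ) t := by
      simpa using ((hasDerivAt_id t).const_mul κ).exp
    exact (((hd t ht).mul he).congr_deriv (by ring)).hasDerivWithinAt
  · rw [interior_Icc] at ht
    exact mul_nonpos_of_nonpos_of_nonneg (by linarith [hle t ht]) (Real.exp_pos _).le

theorem antitoneOn_Ici_of_antitoneOn_Icc_succ {α β : Type*} [LinearOrder α] [Preorder β]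
    {f : α → β} {tk : ℕ → α} (hmono : Monotone tk) (htop : Tendsto tk atTop atTop)
    (h : ∀ k, AntitoneOn f (Set.Icc (tk k) (tk (k + 1)))) : AntitoneOn f (Set.Ici (tk 0)) := by
  have hI : ∀ k, AntitoneOn f (Set.Icc (tk 0) (tk k)) := by
    intro k
    induction k with
    | zero => simp
    | succ k ih =>
      rw [← Set.Icc_union_Icc_eq_Icc (hmono k.zero_le) (hmono k.le_succ)]
      exact ih.union_right (h k) (isGreatest_Icc (hmono k.zero_le)) (isLeast_Icc (hmono k.le_succ))
  intro s hs t ht hst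
  obtain ⟨k, hk⟩ := (htop.eventually_ge_atTop t).exists
  exact hI k ⟨hs, hst.trans hk⟩ ⟨(Set.mem_Ici.mp hs).trans hst, hk⟩ hst

theorem tendsto_of_hasDerivAt_neg_mulVec_sub {n : Type*} [Fintype n] {L : ℕ → Matrix n n ℝ}
    {c : ℝ} (hc : 0 < c) (hL : ∀ k v, c * (v ⬝ᵥ v) ≤ v ⬝ᵥ L k *ᵥ v) {tk : ℕ → ℝ}
    (htk0 : tk 0 = 0) (hmono : Monotone tk) (htop : Tendsto tk atTop atTop) {x : ℝ → n → ℝ}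
    {xs : n → ℝ} (hcont : ContinuousOn x (Set.Ici 0))
    (hode : ∀ k, ∀ t ∈ Set.Ioo (tk k) (tk (k + 1)), HasDerivAt x (-(L k *ᵥ (x t - xs))) t) :
    Tendsto x atTop (nhds xs) := by
  set g : ℝ → ℝ := fun t => (x t - xs) ⬝ᵥ (x t - xs)
  have hg0 : ∀ t, 0 ≤ g t := fun t => by
    simpa only [star_trivial] using dotProduct_star_self_nonneg (x t - xs)
  have hanti : AntitoneOn (fun t => g t * Real.exp (2 * c * t)) (Set.Ici 0) := by
    rw [← htk0]
    refine antitoneOn_Ici_of_antitoneOn_Icc_succ hmono htop fun k =>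
      antitoneOn_mul_exp_of_hasDerivAt ?_ (fun t ht => ((hode k t ht).sub_const xs).dotProduct_self)
        fun t _ => ?_
    · have hsub : Set.Icc (tk k) (tk (k + 1)) ⊆ Set.Ici 0 := fun t ht =>
        htk0 ▸ (hmono k.zero_le).trans ht.1
      have hx := (hcont.mono hsub).sub (continuousOn_const (c := xs))
      exact (continuous_fst.dotProduct continuous_snd).comp_continuousOn (hx.prodMk hx)
    · simp only [dotProduct_neg]
      linarith [hL k (x t - xs)]
  have hbound : ∀ t, 0 ≤ t → g t ≤ g 0 * Real.exp (-(2 * c * t)) := fun t ht => by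
    rw [Real.exp_neg, ← div_eq_mul_inv, le_div_iff₀ (Real.exp_pos _)]
    simpa using hanti (Set.mem_Ici.mpr le_rfl) ht ht
  have hg : Tendsto g atTop (nhds 0) := by
    refine squeeze_zero' (.of_forall hg0) ((eventually_ge_atTop 0).mono hbound) ?_
    simpa using (Real.tendsto_exp_neg_atTop_nhds_zero.comp
      (tendsto_id.const_mul_atTop (by positivity : 0 < 2 * c))).const_mul (g 0)
  refine tendsto_iff_norm_sub_tendsto_zero.mpr
    (squeeze_zero (fun _ => norm_nonneg _) (fun t => norm_le_sqrt_dotProduct_self _) ?_)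
  rw [← Real.sqrt_zero]
  exact (Real.continuous_sqrt.tendsto 0).comp hg

end Decay

theorem stmt14_general (N d M : ℕ)
    (θ : Fin d → ℝ)
    (A : Fin M → Fin N → Fin N → Matrix (Fin d) (Fin d) ℝ)
    (hA : ∀ m, SignedWeights (A m))
    (V1 V2 : Fin M → Finset (Fin N))
    (hAss : ∀ m, Assumption1 (A m) (V1 m) (V2 m))
    (hPD : ∀ m, ∀ i ∈ V1 m, (∑ j ∈ OmegaSet (A m) i, absM (A m i j)).PosDef)
    (δ : Fin M → ℝ) (hδ : ∀ m, 0 < δ m)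
    (hδC : ∀ m, ∀ i ∈ V1 m, ∀ μ : ℝ,
      (((∑ j ∈ OmegaSet (A m) i, absM (A m i j))⁻¹ *
        (outDeg (A m) i - inDeg (A m) i)).charpoly).IsRoot μ → μ / 2 < δ m)
    (δi : Fin M → Fin N → ℝ)
    (hδi : ∀ m i, δi m i = if (OmegaSet (A m) i).Nonempty then δ m else 0)
    (B : Fin M → Fin N → Matrix (Fin d) (Fin d) ℝ)
    (hB : ∀ m i, B m i = ∑ j ∈ OmegaSet (A m) i, absM (A m i j))
    (x₀ : Fin M → Fin d → ℝ) (hx₀ : ∀ m, x₀ m = (1 + 2 / δ m) • θ)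
    (LB : Fin M → Matrix (Fin N × Fin d) (Fin N × Fin d) ℝ)
    (hLB : ∀ m, LB m = Lap (A m) + blockDiag' fun i => δi m i • B m i)
    (b : Fin M → Fin N × Fin d → ℝ)
    (hb : ∀ m, b m = fun p => ((δi m p.1 • B m p.1).mulVec (x₀ m)) p.2)
    (tk : ℕ → ℝ) (htk0 : tk 0 = 0) (hmono : StrictMono tk)
    (htop : Tendsto tk atTop atTop)
    (σ : ℕ → Fin M)
    (x : ℝ → (Fin N × Fin d → ℝ))
    (hcont : ContinuousOn x (Set.Ici (0 : ℝ)))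
    (hode : ∀ k : ℕ, ∀ t ∈ Set.Ioo (tk k) (tk (k + 1)),
      HasDerivAt x (-((LB (σ k)).mulVec (x t)) + b (σ k)) t) :
    Tendsto x atTop (nhds fun p => θ p.2) := by
  have hδB : ∀ m i, δi m i • B m i = δ m • negInDeg (A m) i := fun m i => by
    rw [hδi, hB, negInDeg]
    split_ifs with h
    · rfl
    · rw [Finset.not_nonempty_iff_eq_empty.mp h, Finset.sum_empty, smul_zero, smul_zero]
  have hLB' : ∀ m, LB m = groundedLap (A m) (δ m) := fun m => by
    simp only [hLB, hδB, groundedLap]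
  have hb' : ∀ m, b m = LB m *ᵥ fun p => θ p.2 := fun m => by
    rw [hLB', (hA m).groundedLap_mulVec_const (hδ m).ne', hb, hx₀]
    simp only [hδB]
  have hpos : ∀ m, ∀ v, v ≠ 0 → 0 < v ⬝ᵥ LB m *ᵥ v := fun m v hv => by
    rw [hLB']
    exact dotProduct_groundedLap_mulVec_pos (hA m) (hAss m) (hδ m).le
      (fun i hi => (hA m).posDef_two_mul_smul_negInDeg_sub (hPD m i hi) (hδC m i hi)) hv
  choose c hc hcL using fun m => exists_pos_mul_dotProduct_self_le_of_pos (hpos m)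
  have : Nonempty (Fin M) := ⟨σ 0⟩
  obtain ⟨m₀, hm₀⟩ := Finite.exists_min c
  refine tendsto_of_hasDerivAt_neg_mulVec_sub (hc m₀) (L := fun k => LB (σ k))
    (fun k v => le_trans ?_ (hcL (σ k) v)) htk0 hmono.monotone htop hcont fun k t ht => ?_
  · exact mul_le_mul_of_nonneg_right (hm₀ _) (by simpa using dotProduct_star_self_nonneg v)
  · rw [mulVec_sub, ← hb', neg_sub, ← neg_add_eq_sub]
    exact hode k t ht

/-- Theorem 4: non-trivial consensus under switching topologies.
Each topology `A^{(m)}` satisfies Assumption 1 and the coupling strength `δ^{(m)}`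
exceeds `max(0, max_{i∈V1^{(m)}} C_i^{(m)})`, expressed by requiring
`δ^{(m)} > μ/2` for every (real) eigenvalue `μ` of the indicated matrices (all of
whose eigenvalues are real). A continuous solution of the switched system with the
designed inputs converges to `1_N ⊗ θ`. -/
theorem stmt14 (N d M : ℕ) (hN : 1 ≤ N) (hd : 1 ≤ d)
    (θ : Fin d → ℝ) (hθ : θ ≠ 0)
    (A : Fin M → Fin N → Fin N → Matrix (Fin d) (Fin d) ℝ)
    (hA : ∀ m, SignedWeights (A m))
    (V1 V2 : Fin M → Finset (Fin N))
    (hAss : ∀ m, Assumption1 (A m) (V1 m) (V2 m))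
    (hPD : ∀ m, ∀ i ∈ V1 m, (∑ j ∈ OmegaSet (A m) i, absM (A m i j)).PosDef)
    (δ : Fin M → ℝ) (hδ : ∀ m, 0 < δ m)
    (hδC : ∀ m, ∀ i ∈ V1 m, ∀ μ : ℝ,
      (((∑ j ∈ OmegaSet (A m) i, absM (A m i j))⁻¹ *
        (outDeg (A m) i - inDeg (A m) i)).charpoly).IsRoot μ → μ / 2 < δ m)
    (δi : Fin M → Fin N → ℝ)
    (hδi : ∀ m i, δi m i = if (OmegaSet (A m) i).Nonempty then δ m else 0)
    (B : Fin M → Fin N → Matrix (Fin d) (Fin d) ℝ)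
    (hB : ∀ m i, B m i = ∑ j ∈ OmegaSet (A m) i, absM (A m i j))
    (x₀ : Fin M → Fin d → ℝ) (hx₀ : ∀ m, x₀ m = (1 + 2 / δ m) • θ)
    (LB : Fin M → Matrix (Fin N × Fin d) (Fin N × Fin d) ℝ)
    (hLB : ∀ m, LB m = Lap (A m) + blockDiag' fun i => δi m i • B m i)
    (b : Fin M → Fin N × Fin d → ℝ)
    (hb : ∀ m, b m = fun p => ((δi m p.1 • B m p.1).mulVec (x₀ m)) p.2)
    (α : ℝ) (hα : 0 < α)
    (tk : ℕ → ℝ) (htk0 : tk 0 = 0) (hmono : StrictMono tk)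
    (hgap : ∀ k, α ≤ tk (k + 1) - tk k) (htop : Tendsto tk atTop atTop)
    (σ : ℕ → Fin M)
    (x : ℝ → (Fin N × Fin d → ℝ))
    (hcont : ContinuousOn x (Set.Ici (0 : ℝ)))
    (hode : ∀ k : ℕ, ∀ t ∈ Set.Ioo (tk k) (tk (k + 1)),
      HasDerivAt x (-((LB (σ k)).mulVec (x t)) + b (σ k)) t) :
    Tendsto x atTop (nhds fun p => θ p.2) :=
  stmt14_general N d M θ A hA V1 V2 hAss hPD δ hδ hδC δi hδi B hB x₀ hx₀ LB hLB b hb tk htk0 hmono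
    htop σ x hcont hode
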